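/- arXiv:2306.06903 — 3 statements merged into one kernel-verified Lean document; each statement's English description precedes it below -/
import Mathlib

section
/- Let A and B be fuzzy linear codes in F_q^n with A ⊥ B. Then B ⊥ A; that is, Im(A) = {1 − c : c ∈ Im(B)} and A_{1−s} = (B_s)^⊥ for every s ∈ Im(B). Consequently, writing A^⊥ for the unique fuzzy linear code orthogonal to A, one has (A^⊥)^⊥ = A whenever A^⊥ exists. -/
open scoped BigOperators

/-- A fuzzy set in `V`: a membership function with values in `[0,1]`. -/
def IsFuzzySet {V : Type*} (A : V → ℝ) : Prop :=
  ∀ x, 0 ≤ A x ∧ A x ≤ 1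

/-- The upper `α`-level cut of a fuzzy set `A`. -/
def levelCut {V : Type*} (A : V → ℝ) (α : ℝ) : Set V :=
  {x | α ≤ A x}

/-- A set of vectors is an `F`-linear subspace. -/
def IsFLinearSet (F : Type*) {V : Type*} [Field F] [AddCommGroup V] [Module F V]
    (s : Set V) : Prop :=
  ∃ W : Submodule F V, s = (W : Set V)

/-- A fuzzy linear code: a fuzzy set all of whose nonempty upper `α`-level cuts
(for `α ∈ [0,1]`) are linear subspaces. -/
def IsFuzzyLinearCode (F : Type*) {V : Type*} [Field F] [AddCommGroup V] [Module F V]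
    (A : V → ℝ) : Prop :=
  IsFuzzySet A ∧
    ∀ α ∈ Set.Icc (0 : ℝ) 1, (levelCut A α).Nonempty → IsFLinearSet F (levelCut A α)

/-- The Euclidean dual of a set of vectors in `F^n`. -/
def dualSet {F : Type*} [Field F] {n : ℕ} (S : Set (Fin n → F)) : Set (Fin n → F) :=
  {y | ∀ x ∈ S, ∑ i, x i * y i = 0}

/-- `B` is orthogonal to `A` (written `A ⊥ B`): the image of `B` is
`{1 - c : c ∈ Im A}` and `B_{1-t} = (A_t)^⊥` for every `t ∈ Im A`. -/
def FuzzyOrth {F : Type*} [Field F] {n : ℕ} (A B : (Fin n → F) → ℝ) : Prop :=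
  Set.range B = (fun c => 1 - c) '' Set.range A ∧
    ∀ t ∈ Set.range A, levelCut B (1 - t) = dualSet (levelCut A t)

/-!
Both parts of `A ⊥ B` can be read backwards because both operations involved are involutions:
`c ↦ 1 - c` on `ℝ`, which swaps the two images, and the Euclidean dual on subspaces of `F^n`
(the dot product is a nondegenerate symmetric form on a finite-dimensional space). Since every
level cut `A_t` with `t ∈ Im A` is a subspace, dualizing `B_{1-t} = (A_t)^⊥` gives
`A_t = (B_{1-t})^⊥`.
-/

open Matrix

section DotProduct

variable {K ι : Type*} [Field K] [Fintype ι]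

theorem dotProductBilin_isRefl :
    LinearMap.BilinForm.IsRefl (dotProductBilin K K : LinearMap.BilinForm K (ι → K)) :=
  fun x y h => by simpa [dotProduct_comm] using h

theorem dotProductBilin_nondegenerate :
    LinearMap.BilinForm.Nondegenerate (dotProductBilin K K : LinearMap.BilinForm K (ι → K)) :=
  ⟨fun x hx => dotProduct_eq_zero_iff.mp hx,
    fun y hy => dotProduct_eq_zero_iff.mp fun x => by simpa [dotProduct_comm] using hy x⟩

end DotProduct

section DualSet

variable {F : Type*} [Field F] {n : ℕ}

theorem dualSet_coe_submodule (W : Submodule F (Fin n → F)) :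
    dualSet (W : Set (Fin n → F)) = LinearMap.BilinForm.orthogonal (dotProductBilin F F) W := by
  ext y
  simp [dualSet, LinearMap.BilinForm.mem_orthogonal_iff, dotProduct]

theorem dualSet_dualSet_coe_submodule (W : Submodule F (Fin n → F)) :
    dualSet (dualSet (W : Set (Fin n → F))) = W := by
  rw [dualSet_coe_submodule, dualSet_coe_submodule,
    LinearMap.BilinForm.orthogonal_orthogonal dotProductBilin_nondegenerate dotProductBilin_isRefl]

end DualSet

theorem IsFuzzyLinearCode.exists_submodule_levelCut_eq {F V : Type*} [Field F] [AddCommGroup V]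
    [Module F V] {A : V → ℝ} (hA : IsFuzzyLinearCode F A) {t : ℝ} (ht : t ∈ Set.range A) :
    ∃ W : Submodule F V, levelCut A t = W := by
  obtain ⟨x, rfl⟩ := ht
  exact hA.2 (A x) ⟨(hA.1 x).1, (hA.1 x).2⟩ ⟨x, le_refl (A x)⟩

theorem FuzzyOrth.range_left_eq_image_one_sub {F : Type*} [Field F] {n : ℕ}
    {A B : (Fin n → F) → ℝ} (hAB : FuzzyOrth A B) :
    Set.range A = (fun c => 1 - c) '' Set.range B := by
  rw [hAB.1, Set.image_image]
  simp

theorem fuzzyOrth_symm_general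
    {F : Type} [Field F] {n : ℕ}
    (A B : (Fin n → F) → ℝ)
    (hA : IsFuzzyLinearCode F A)
    (hAB : FuzzyOrth A B) :
    FuzzyOrth B A := by
  refine ⟨hAB.range_left_eq_image_one_sub, ?_⟩
  intro s hs
  rw [hAB.1] at hs
  obtain ⟨t, htA, rfl⟩ := hs
  obtain ⟨W, hW⟩ := hA.exists_submodule_levelCut_eq htA
  rw [sub_sub_cancel, hAB.2 t htA, hW, dualSet_dualSet_coe_submodule]

/-- orthogonality of fuzzy linear codes is symmetric: if `A ⊥ B` then
`B ⊥ A`, i.e. `Im A = {1 - c : c ∈ Im B}` and `A_{1-s} = (B_s)^⊥` for every `s ∈ Im B`.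
(Consequently `(A^⊥)^⊥ = A` whenever the dual `A^⊥` exists.) -/
theorem fuzzyOrth_symm
    {F : Type} [Field F] [Fintype F] {n : ℕ} (hn : 0 < n)
    (A B : (Fin n → F) → ℝ)
    (hA : IsFuzzyLinearCode F A) (hB : IsFuzzyLinearCode F B)
    (hAB : FuzzyOrth A B) :
    FuzzyOrth B A :=
  fuzzyOrth_symm_general A B hA hAB
end

section
/- Let N ≥ 1 and let m ≥ 3 be an odd integer. Let C_0 ⊊ C_1 ⊊ ⋯ ⊊ C_m be a strictly increasing chain of F_2-linear subspaces of F_2^N with {0} ⊊ C_0, C_m = F_2^N, and C_r^⊥ = C_{m−r−1} for all 0 ≤ r ≤ m−1 (the binary Reed–Muller codes C_r = R(r, m) of length N = 2^m satisfy all of these hypotheses). Then there exist real numbers 1 > α_0 > α_1 > ⋯ > α_{(m−3)/2} > 1/2 and a fuzzy self-dual code A in F_2^N such that A_1 = {0}, A_{1/2} = C_{(m−1)/2}, and A_{α_r} = C_r for all 0 ≤ r ≤ (m−3)/2. -/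
open scoped BigOperators

/-- A fuzzy self-orthogonal code: a fuzzy linear code with `|Im A| > 1` such that
`(A_{1-α})^⊥ = A_α` for every `α ∈ Im A`. -/
def IsFuzzySelfOrthogonal {F : Type*} [Field F] {n : ℕ} (A : (Fin n → F) → ℝ) : Prop :=
  IsFuzzyLinearCode F A ∧ 1 < (Set.range A).ncard ∧
    ∀ α ∈ Set.range A, dualSet (levelCut A (1 - α)) = levelCut A α

/-- A fuzzy self-dual code: a fuzzy self-orthogonal code such that `(A_β)^⊥ = A_β`
for some `β ∈ Im A`. -/
def IsFuzzySelfDual {F : Type*} [Field F] {n : ℕ} (A : (Fin n → F) → ℝ) : Prop :=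
  IsFuzzySelfOrthogonal A ∧ ∃ β ∈ Set.range A, dualSet (levelCut A β) = levelCut A β

/-!
Pad the chain to `⊥ = D 0 ≤ D 1 = C 0 ≤ ⋯ ≤ D (m + 1) = C m = ⊤` and give a vector `x` the
membership `1 - j / (m + 1)`, where `j` is the first index with `x ∈ D j`; the level cuts of
this fuzzy set are exactly the `D j`. The hypothesis `(C r)^⊥ = C (m - r - 1)` becomes
`(D j)^⊥ = D (m + 1 - j)`, which is the self-orthogonality `(A_{1-α})^⊥ = A_α`. For `m = 2k + 1`
the middle code `D (k + 1) = C k` is the cut at level `1/2`, and it is self-dual.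
-/

open Set

section Chain

variable {K V : Type*} [Semiring K] [AddCommMonoid V] [Module K V]

def paddedChain (C : ℕ → Submodule K V) (m : ℕ) : ℕ → Submodule K V
  | 0 => ⊥
  | r + 1 => if r < m then C r else ⊤

variable {C : ℕ → Submodule K V} {m : ℕ}

theorem paddedChain_succ (htop : C m = ⊤) {r : ℕ} (hr : r ≤ m) :
    paddedChain C m (r + 1) = C r := by
  rcases hr.lt_or_eq with hr | rfl
  · simp [paddedChain, hr]
  · simp [paddedChain, htop]

theorem paddedChain_top : paddedChain C m (m + 1) = ⊤ := by
  simp [paddedChain]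

theorem paddedChain_monotone (hC : ∀ r, r + 1 < m → C r ≤ C (r + 1)) :
    Monotone (paddedChain C m) := by
  refine monotone_nat_of_le_succ fun r => ?_
  rcases r with _ | r
  · exact bot_le
  · by_cases hr : r + 1 < m
    · simpa [paddedChain, hr, (Nat.lt_succ_self r).trans hr] using hC r hr
    · simp [paddedChain, hr]

/-- Junk value `0` when `x` lies in no `D r`, since `sInf ∅ = 0`. -/
noncomputable def chainGrade (D : ℕ → Submodule K V) (x : V) : ℕ :=
  sInf {r | x ∈ D r}

noncomputable def chainFuzzySet (D : ℕ → Submodule K V) (n : ℕ) (x : V) : ℝ :=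
  1 - chainGrade D x / n

variable {D : ℕ → Submodule K V} {n : ℕ}

theorem chainGrade_le_iff (hD : Monotone D) (htop : D n = ⊤) {x : V} {r : ℕ} :
    chainGrade D x ≤ r ↔ x ∈ D r := by
  have hne : {r | x ∈ D r}.Nonempty := ⟨n, by simp [htop]⟩
  exact ⟨fun h => hD h (Nat.sInf_mem hne), fun h => Nat.sInf_le h⟩

theorem chainGrade_le (htop : D n = ⊤) (x : V) : chainGrade D x ≤ n :=
  Nat.sInf_le (by simp [htop])

theorem chainGrade_eq_succ (hD : Monotone D) (htop : D n = ⊤) {x : V} {j : ℕ}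
    (hx : x ∈ D (j + 1)) (hx' : x ∉ D j) : chainGrade D x = j + 1 := by
  rw [← chainGrade_le_iff hD htop] at hx hx'
  omega

theorem isFuzzySet_chainFuzzySet (htop : D n = ⊤) : IsFuzzySet (chainFuzzySet D n) := by
  intro x
  have hle : (chainGrade D x : ℝ) / n ≤ 1 :=
    div_le_one_of_le₀ (by exact_mod_cast chainGrade_le htop x) n.cast_nonneg
  have hnonneg : 0 ≤ (chainGrade D x : ℝ) / n := by positivity
  constructor <;> simp only [chainFuzzySet] <;> linarith

theorem finite_range_chainFuzzySet (htop : D n = ⊤) : (range (chainFuzzySet D n)).Finite := by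
  refine ((finite_Iic n).image fun j : ℕ => 1 - (j : ℝ) / n).subset ?_
  rintro _ ⟨x, rfl⟩
  exact ⟨chainGrade D x, chainGrade_le htop x, rfl⟩

theorem levelCut_chainFuzzySet (hD : Monotone D) (htop : D n = ⊤) (hn : 0 < n) {β : ℝ}
    (hβ : β ≤ 1) : levelCut (chainFuzzySet D n) β = D ⌊(1 - β) * n⌋₊ := by
  have hn' : (0 : ℝ) < n := by exact_mod_cast hn
  ext x
  rw [levelCut, mem_ofPred_eq, SetLike.mem_coe, ← chainGrade_le_iff hD htop,
    Nat.le_floor_iff (by nlinarith), ← div_le_iff₀ hn', chainFuzzySet]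
  constructor <;> intro h <;> linarith

theorem levelCut_chainFuzzySet_one_sub_div (hD : Monotone D) (htop : D n = ⊤) (hn : 0 < n)
    (j : ℕ) : levelCut (chainFuzzySet D n) (1 - j / n) = D j := by
  have hn' : (n : ℝ) ≠ 0 := by exact_mod_cast hn.ne'
  rw [levelCut_chainFuzzySet hD htop hn (sub_le_self _ (by positivity)),
    sub_sub_cancel, div_mul_cancel₀ _ hn', Nat.floor_natCast]

end Chain

theorem strictAnti_one_sub_div {n : ℕ} (hn : 0 < n) : StrictAnti fun j : ℕ => 1 - (j : ℝ) / n :=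
  fun _ _ h => by
    dsimp only
    gcongr

section Dual

variable {F : Type*} [Field F] {N : ℕ}

theorem dualSet_univ : dualSet (univ : Set (Fin N → F)) = {0} := by
  ext y
  refine ⟨fun h => funext fun i => ?_, by rintro rfl x -; simp⟩
  simpa [Pi.single_apply, ite_mul] using h (Pi.single i 1) (mem_univ _)

theorem dualSet_zero : dualSet ({0} : Set (Fin N → F)) = univ := by
  ext y
  simp [dualSet]

theorem dualSet_paddedChain {C : ℕ → Submodule F (Fin N → F)} {m : ℕ} (htop : C m = ⊤)
    (hdual : ∀ r ≤ m - 1, dualSet (C r : Set (Fin N → F)) = C (m - r - 1))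
    {j : ℕ} (hj : j ≤ m + 1) :
    dualSet (paddedChain C m (m + 1 - j) : Set (Fin N → F)) = paddedChain C m j := by
  rcases j with _ | j
  · simp [paddedChain, dualSet_univ]
  rcases (show j = m ∨ j < m by omega) with rfl | hjm
  · simp [paddedChain, dualSet_zero]
  · rw [show m + 1 - (j + 1) = m - j - 1 + 1 by omega, paddedChain_succ htop (by omega),
      paddedChain_succ htop hjm.le, hdual _ (by omega), show m - (m - j - 1) - 1 = j by omega]

variable {D : ℕ → Submodule F (Fin N → F)} {n : ℕ}

theorem isFuzzyLinearCode_chainFuzzySet (hD : Monotone D) (htop : D n = ⊤) (hn : 0 < n) :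
    IsFuzzyLinearCode F (chainFuzzySet D n) :=
  ⟨isFuzzySet_chainFuzzySet htop, fun _ hβ _ => ⟨_, levelCut_chainFuzzySet hD htop hn hβ.2⟩⟩

theorem isFuzzySelfOrthogonal_chainFuzzySet (hD : Monotone D) (htop : D n = ⊤)
    (hlt : D 0 < D n) (hdual : ∀ j ≤ n, dualSet (D (n - j) : Set (Fin N → F)) = D j) :
    IsFuzzySelfOrthogonal (chainFuzzySet D n) := by
  have hn : 0 < n := Nat.pos_of_ne_zero (by rintro rfl; exact hlt.ne rfl)
  have hcut := levelCut_chainFuzzySet_one_sub_div hD htop hn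
  refine ⟨isFuzzyLinearCode_chainFuzzySet hD htop hn, ?_, ?_⟩
  · obtain ⟨x, -, hx⟩ := SetLike.exists_of_lt hlt
    have hx0 : chainGrade D x ≠ 0 := by rwa [Ne, ← Nat.le_zero, chainGrade_le_iff hD htop]
    have h00 : chainGrade D 0 = 0 := Nat.le_zero.1 ((chainGrade_le_iff hD htop).2 (zero_mem _))
    rw [one_lt_ncard_iff (finite_range_chainFuzzySet htop)]
    refine ⟨_, _, ⟨0, rfl⟩, ⟨x, rfl⟩, ?_⟩
    have hpos : (0 : ℝ) < chainGrade D x / n :=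
      div_pos (by exact_mod_cast Nat.pos_of_ne_zero hx0) (by exact_mod_cast hn)
    rw [chainFuzzySet, chainFuzzySet, h00, Nat.cast_zero, zero_div]
    linarith
  · rintro _ ⟨x, rfl⟩
    have hg := chainGrade_le htop x
    have hflip : 1 - chainFuzzySet D n x = 1 - ((n - chainGrade D x : ℕ) : ℝ) / n := by
      have hn' : (n : ℝ) ≠ 0 := by exact_mod_cast hn.ne'
      rw [chainFuzzySet, Nat.cast_sub hg]
      field_simp
    rw [hflip, hcut, chainFuzzySet, hcut]
    exact hdual _ hg

theorem isFuzzySelfDual_chainFuzzySet (hD : Monotone D) (htop : D n = ⊤) {j : ℕ}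
    (hn : n = 2 * (j + 1)) (hmid : D j < D (j + 1))
    (hdual : ∀ i ≤ n, dualSet (D (n - i) : Set (Fin N → F)) = D i) :
    IsFuzzySelfDual (chainFuzzySet D n) := by
  have hlt : D 0 < D n := ((hD j.zero_le).trans_lt hmid).trans_le (hD (by omega))
  refine ⟨isFuzzySelfOrthogonal_chainFuzzySet hD htop hlt hdual, ?_⟩
  obtain ⟨x, hx, hx'⟩ := SetLike.exists_of_lt hmid
  refine ⟨_, ⟨x, rfl⟩, ?_⟩
  have hcut := levelCut_chainFuzzySet_one_sub_div hD htop (by omega) (j + 1)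
  rw [chainFuzzySet, chainGrade_eq_succ hD htop hx hx', hcut]
  simpa [show n - (j + 1) = j + 1 by omega] using hdual (j + 1) (by omega)

end Dual

theorem fuzzySelfDual_of_ReedMuller_chain_odd_general
    {N m : ℕ} (hm : 3 ≤ m) (hmodd : Odd m)
    (C : ℕ → Submodule (ZMod 2) (Fin N → ZMod 2))
    (hchain : ∀ r < m, C r < C (r + 1))
    (htop : C m = ⊤)
    (hdual : ∀ r ≤ m - 1,
      dualSet (C r : Set (Fin N → ZMod 2)) = (C (m - r - 1) : Set (Fin N → ZMod 2))) :
    ∃ α : ℕ → ℝ,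
      α 0 < 1 ∧ (∀ r < (m - 3) / 2, α (r + 1) < α r) ∧ 1 / 2 < α ((m - 3) / 2) ∧
      ∃ A : (Fin N → ZMod 2) → ℝ,
        IsFuzzySelfDual A ∧
        levelCut A 1 = {0} ∧
        levelCut A (1 / 2) = (C ((m - 1) / 2) : Set (Fin N → ZMod 2)) ∧
        ∀ r ≤ (m - 3) / 2, levelCut A (α r) = (C r : Set (Fin N → ZMod 2)) := by
  obtain ⟨k, rfl⟩ := hmodd
  set D := paddedChain C (2 * k + 1)
  have hD : Monotone D := paddedChain_monotone fun r hr => (hchain r (by omega)).le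
  have hD_succ : ∀ r ≤ 2 * k + 1, D (r + 1) = C r := fun r hr => paddedChain_succ htop hr
  have hmid : D k < D (k + 1) := by
    obtain ⟨i, rfl⟩ : ∃ i, k = i + 1 := ⟨k - 1, by omega⟩
    rw [hD_succ i (by omega), hD_succ (i + 1) (by omega)]
    exact hchain i (by omega)
  have hn : 2 * k + 1 + 1 = 2 * (k + 1) := by ring
  have hcut := levelCut_chainFuzzySet_one_sub_div hD paddedChain_top (Nat.succ_pos (2 * k + 1))
  have hlevel := strictAnti_one_sub_div (Nat.succ_pos (2 * k + 1))
  have hhalf : 1 - ((k + 1 : ℕ) : ℝ) / (2 * k + 1 + 1 : ℕ) = 1 / 2 := by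
    rw [hn]
    push_cast
    field_simp
    ring
  refine ⟨fun r => 1 - ((r + 1 : ℕ) : ℝ) / (2 * k + 1 + 1 : ℕ), ?_,
    fun r _ => hlevel (r + 1).lt_succ_self, ?_, chainFuzzySet D (2 * k + 1 + 1),
    isFuzzySelfDual_chainFuzzySet hD paddedChain_top hn hmid
      fun i hi => dualSet_paddedChain htop hdual hi, ?_, ?_,
    fun r hr => (hcut _).trans (by rw [hD_succ r (by omega)])⟩
  · simpa using hlevel zero_lt_one
  · dsimp only
    rw [← hhalf, show (2 * k + 1 - 3) / 2 + 1 = k by omega]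
    exact hlevel k.lt_succ_self
  · simpa [D, paddedChain] using hcut 0
  · rw [← hhalf, hcut, hD_succ k (by omega), show (2 * k + 1 - 1) / 2 = k by omega]

/-- odd case, Reed–Muller-type chains: given a strictly increasing chain
`{0} ⊊ C 0 ⊊ C 1 ⊊ ⋯ ⊊ C m = F_2^N` of binary linear codes with
`(C r)^⊥ = C (m - r - 1)` for `0 ≤ r ≤ m - 1`, where `m ≥ 3` is odd, there are reals
`1 > α 0 > ⋯ > α ((m-3)/2) > 1/2` and a fuzzy self-dual code `A` in `F_2^N` with
`A_1 = {0}`, `A_{1/2} = C ((m-1)/2)`, and `A_{α r} = C r` for `0 ≤ r ≤ (m-3)/2`. -/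
theorem fuzzySelfDual_of_ReedMuller_chain_odd
    {N m : ℕ} (hN : 1 ≤ N) (hm : 3 ≤ m) (hmodd : Odd m)
    (C : ℕ → Submodule (ZMod 2) (Fin N → ZMod 2))
    (hchain : ∀ r < m, C r < C (r + 1))
    (h0 : ⊥ < C 0)
    (htop : C m = ⊤)
    (hdual : ∀ r ≤ m - 1,
      dualSet (C r : Set (Fin N → ZMod 2)) = (C (m - r - 1) : Set (Fin N → ZMod 2))) :
    ∃ α : ℕ → ℝ,
      α 0 < 1 ∧ (∀ r < (m - 3) / 2, α (r + 1) < α r) ∧ 1 / 2 < α ((m - 3) / 2) ∧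
      ∃ A : (Fin N → ZMod 2) → ℝ,
        IsFuzzySelfDual A ∧
        levelCut A 1 = {0} ∧
        levelCut A (1 / 2) = (C ((m - 1) / 2) : Set (Fin N → ZMod 2)) ∧
        ∀ r ≤ (m - 3) / 2, levelCut A (α r) = (C r : Set (Fin N → ZMod 2)) :=
  fuzzySelfDual_of_ReedMuller_chain_odd_general hm hmodd C hchain htop hdual
end

section
/- Let n ≥ 1 and let C ⊆ F_q^n be a self-orthogonal linear code (C ⊆ C^⊥) of dimension k. Define F : F_q^n → ℝ by F(0) = 1, F(x) = 1 − k/n for x ∈ C ∖ {0}, F(x) = k/n for x ∈ C^⊥ ∖ C, and F(x) = 0 for x ∈ F_q^n ∖ C^⊥. Then F is a fuzzy self-orthogonal code in F_q^n; in particular |Im(F)| > 1 and (F_{1−α})^⊥ = F_α for every α ∈ Im(F). -/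
open scoped BigOperators

/-! Put `D = C^⊥` and `a = k/n`. The fuzzy set `F` is `1, 1 - a, a, 0` on the successive layers
of the flag `{0} ⊆ C ⊆ D ⊆ F_q^n`, and `0 ≤ a ≤ 1 - a` because `2k ≤ n` for a self-orthogonal
code. Two consecutive values coincide only when the layer between them is empty (`a = 0` forces
`C = 0`, `a = 1 - a` forces `C = D`), so the level cuts at the four values are exactly
`{0}, C, D, F_q^n`, and every other nonempty cut is one of them. These are subspaces, and the
duality `(F_{1-α})^⊥ = F_α` reduces to `(F_q^n)^⊥ = {0}`, `C^⊥⊥ = C` and `{0}^⊥ = F_q^n`. -/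

open Module
open LinearMap (BilinForm)

section Field

variable {𝕜 : Type*} [Field 𝕜] [LinearOrder 𝕜] [IsStrictOrderedRing 𝕜] {k n : 𝕜}

theorem div_le_one_sub_div_iff (hn : 0 < n) : k / n ≤ 1 - k / n ↔ 2 * k ≤ n := by
  rw [le_sub_iff_add_le, ← add_div, div_le_one hn, two_mul]

theorem div_lt_one_sub_div_iff (hn : 0 < n) : k / n < 1 - k / n ↔ 2 * k < n := by
  rw [lt_sub_iff_add_lt, ← add_div, div_lt_one hn, two_mul]

end Field

section Dual

variable {K : Type*} [Field K] {n : ℕ}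

theorem dotProductBilin_isRefl_s16 {ι : Type*} [Fintype ι] :
    (dotProductBilin K K : BilinForm K (ι → K)).IsRefl :=
  fun x y h => by simpa [dotProduct_comm] using h

theorem dotProductBilin_nondegenerate_s16 {ι : Type*} [Fintype ι] :
    (dotProductBilin K K : BilinForm K (ι → K)).Nondegenerate :=
  dotProductBilin_isRefl_s16.nondegenerate_iff_separatingLeft.2 fun _ => dotProduct_eq_zero _

def dualCode (W : Submodule K (Fin n → K)) : Submodule K (Fin n → K) :=
  BilinForm.orthogonal (dotProductBilin K K) W

theorem coe_dualCode (W : Submodule K (Fin n → K)) :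
    (dualCode W : Set (Fin n → K)) = dualSet (W : Set (Fin n → K)) := rfl

theorem finrank_dualCode (W : Submodule K (Fin n → K)) :
    finrank K (dualCode W) = n - finrank K W := by
  rw [dualCode, BilinForm.finrank_orthogonal dotProductBilin_nondegenerate_s16, finrank_fin_fun]

theorem dualCode_dualCode (W : Submodule K (Fin n → K)) : dualCode (dualCode W) = W :=
  BilinForm.orthogonal_orthogonal (B := dotProductBilin K K) dotProductBilin_nondegenerate_s16
    dotProductBilin_isRefl_s16 W

theorem dualSet_zero_s16 : dualSet ({0} : Set (Fin n → K)) = Set.univ := by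
  simp [dualSet]

theorem dualCode_bot : dualCode (⊥ : Submodule K (Fin n → K)) = ⊤ :=
  SetLike.coe_injective (by rw [coe_dualCode, Submodule.bot_coe, dualSet_zero_s16, Submodule.top_coe])

theorem dualSet_univ_s16 : dualSet (Set.univ : Set (Fin n → K)) = {0} := by
  have h := congrArg SetLike.coe (dualCode_dualCode (⊥ : Submodule K (Fin n → K)))
  rwa [coe_dualCode, coe_dualCode, Submodule.bot_coe, dualSet_zero_s16] at h

theorem two_mul_finrank_le_of_le_dualCode {C : Submodule K (Fin n → K)} (hso : C ≤ dualCode C) :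
    2 * finrank K C ≤ n := by
  have hle := Submodule.finrank_mono hso
  have hn := (finrank_fin_fun K (n := n)) ▸ Submodule.finrank_le C
  rw [finrank_dualCode] at hle
  omega

theorem two_mul_finrank_lt_of_lt_dualCode {C : Submodule K (Fin n → K)} (hso : C < dualCode C) :
    2 * finrank K C < n := by
  have hlt := Submodule.finrank_lt_finrank_of_lt hso
  rw [finrank_dualCode] at hlt
  omega

end Dual

section LevelCut

variable {V : Type*} {A : V → ℝ}

theorem levelCut_eq_of {α : ℝ} {S : Set V} (hmem : ∀ x ∈ S, α ≤ A x)
    (hnotMem : ∀ x ∉ S, A x < α) : levelCut A α = S :=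
  Set.ext fun x => ⟨fun hx => by_contra fun h => (hnotMem x h).not_ge hx, hmem x⟩

theorem isFuzzyLinearCode_of_finite_range (K : Type*) [Field K] [AddCommGroup V] [Module K V]
    (hA : IsFuzzySet A) (hfin : (Set.range A).Finite)
    (hlin : ∀ x, IsFLinearSet K (levelCut A (A x))) : IsFuzzyLinearCode K A := by
  refine ⟨hA, fun α _ hne => ?_⟩
  obtain ⟨y, hy, hmin⟩ :=
    Set.Finite.exists_minimalFor' A _ (hfin.subset (Set.image_subset_range _ _)) hne
  suffices levelCut A α = levelCut A (A y) from this ▸ hlin y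
  exact levelCut_eq_of (fun x hx => le_trans hy hx)
    fun x hx => lt_of_not_ge fun hαx => hx (hmin hαx (le_of_not_ge hx))

end LevelCut

structure IsLayered {K V : Type*} [Field K] [AddCommGroup V] [Module K V]
    (C D : Submodule K V) (a : ℝ) (A : V → ℝ) : Prop where
  apply_zero : A 0 = 1
  apply_of_mem_inner : ∀ x ∈ (C : Set V) \ {0}, A x = 1 - a
  apply_of_mem_outer : ∀ x ∈ (D : Set V) \ C, A x = a
  apply_of_notMem : ∀ x ∉ D, A x = 0

namespace IsLayered

variable {K V : Type*} [Field K] [AddCommGroup V] [Module K V]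
  {C D : Submodule K V} {a : ℝ} {A : V → ℝ}

theorem apply_cases (h : IsLayered C D a A) (x : V) :
    (x = 0 ∧ A x = 1) ∨ (x ≠ 0 ∧ x ∈ C ∧ A x = 1 - a) ∨ (x ≠ 0 ∧ x ∉ C ∧ x ∈ D ∧ A x = a) ∨
      (x ≠ 0 ∧ x ∉ C ∧ x ∉ D ∧ A x = 0) := by
  by_cases h0 : x = 0
  · exact .inl ⟨h0, h0 ▸ h.apply_zero⟩
  by_cases hC : x ∈ C
  · exact .inr (.inl ⟨h0, hC, h.apply_of_mem_inner x ⟨hC, h0⟩⟩)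
  by_cases hD : x ∈ D
  · exact .inr (.inr (.inl ⟨h0, hC, hD, h.apply_of_mem_outer x ⟨hD, hC⟩⟩))
  · exact .inr (.inr (.inr ⟨h0, hC, hD, h.apply_of_notMem x hD⟩))

theorem apply_mem (h : IsLayered C D a A) (x : V) : A x ∈ ({1, 1 - a, a, 0} : Set ℝ) := by
  rcases h.apply_cases x with ⟨-, hx⟩ | ⟨-, -, hx⟩ | ⟨-, -, -, hx⟩ | ⟨-, -, -, hx⟩ <;> simp [hx]

theorem isFuzzySet (h : IsLayered C D a A) (ha : 0 ≤ a) (ha' : a ≤ 1 - a) : IsFuzzySet A := by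
  intro x
  rcases h.apply_mem x with hx | hx | hx | hx <;> rw [hx] <;> constructor <;> linarith

theorem levelCut_zero (h : IsLayered C D a A) (ha : 0 ≤ a) (ha' : a ≤ 1 - a) :
    levelCut A 0 = Set.univ :=
  Set.eq_univ_of_forall fun x => (h.isFuzzySet ha ha' x).1

theorem levelCut_eq_outer (h : IsLayered C D a A) (ha' : a ≤ 1 - a) (hpos : D ≠ ⊤ → 0 < a) :
    levelCut A a = D := by
  refine levelCut_eq_of (fun x hD => ?_) fun x hD => ?_
  · rcases h.apply_cases x with ⟨-, hx⟩ | ⟨-, -, hx⟩ | ⟨-, -, -, hx⟩ | ⟨-, -, hD', -⟩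
    · linarith
    · linarith
    · exact hx.ge
    · exact absurd hD hD'
  · rw [h.apply_of_notMem x hD]
    exact hpos fun hD' => hD (hD' ▸ Submodule.mem_top)

theorem levelCut_one_sub_eq_inner (h : IsLayered C D a A) (ha : 0 ≤ a) (ha' : a ≤ 1 - a)
    (hlt : C ≠ D → a < 1 - a) :
    levelCut A (1 - a) = C := by
  refine levelCut_eq_of (fun x hC => ?_) fun x hC => ?_
  · rcases h.apply_cases x with ⟨-, hx⟩ | ⟨-, -, hx⟩ | ⟨-, hC', -⟩ | ⟨-, hC', -⟩
    · linarith
    · exact hx.ge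
    all_goals exact absurd hC hC'
  · rcases h.apply_cases x with ⟨rfl, -⟩ | ⟨-, hC', -⟩ | ⟨-, -, hD, hx⟩ | ⟨-, -, -, hx⟩
    · exact absurd C.zero_mem hC
    · exact absurd hC' hC
    · exact hx ▸ hlt fun hCD => hC (hCD ▸ hD)
    · linarith

theorem levelCut_one (h : IsLayered C D a A) (ha' : a ≤ 1 - a) (hpos : C ≠ ⊥ → 0 < a) :
    levelCut A 1 = {0} := by
  refine levelCut_eq_of (fun x hx => ?_) fun x hx => ?_
  · rw [hx, h.apply_zero]
  rcases h.apply_cases x with ⟨rfl, -⟩ | ⟨h0, hC, hx⟩ | ⟨-, -, -, hx⟩ | ⟨-, -, -, hx⟩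
  · exact absurd rfl hx
  · linarith [hpos ((Submodule.ne_bot_iff C).2 ⟨x, hC, h0⟩)]
  · linarith
  · linarith

end IsLayered

theorem IsLayered.isFuzzySelfOrthogonal {K : Type*} [Field K] {n : ℕ} (hn : 0 < n)
    {C : Submodule K (Fin n → K)} {a : ℝ} {A : (Fin n → K) → ℝ}
    (h : IsLayered C (dualCode C) a A) (ha : 0 ≤ a) (ha' : a ≤ 1 - a)
    (hpos : C ≠ ⊥ → 0 < a) (hlt : C ≠ dualCode C → a < 1 - a) : IsFuzzySelfOrthogonal A := by
  have cut_zero := h.levelCut_zero ha ha'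
  have cut_a := h.levelCut_eq_outer ha' fun hD => hpos fun hC => hD (hC ▸ dualCode_bot)
  have cut_one_sub := h.levelCut_one_sub_eq_inner ha ha' hlt
  have cut_one := h.levelCut_one ha' hpos
  have hfin : (Set.range A).Finite :=
    (Set.toFinite {1, 1 - a, a, 0}).subset (Set.range_subset_iff.2 h.apply_mem)
  refine ⟨isFuzzyLinearCode_of_finite_range K (h.isFuzzySet ha ha') hfin fun x => ?_, ?_, ?_⟩
  · rcases h.apply_mem x with hx | hx | hx | hx <;> rw [hx]
    exacts [⟨⊥, cut_one⟩, ⟨C, cut_one_sub⟩, ⟨_, cut_a⟩, ⟨⊤, cut_zero⟩]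
  · have : Nonempty (Fin n) := ⟨⟨0, hn⟩⟩
    obtain ⟨x, hx⟩ := exists_ne (0 : Fin n → K)
    refine (Set.one_lt_ncard hfin).2 ⟨1, ⟨0, h.apply_zero⟩, A x, ⟨x, rfl⟩, fun hx1 => hx ?_⟩
    rw [← Set.mem_singleton_iff, ← cut_one]
    exact hx1.le
  · rintro - ⟨x, rfl⟩
    rcases h.apply_mem x with hx | hx | hx | hx <;> rw [hx]
    · rw [sub_self, cut_zero, cut_one, dualSet_univ_s16]
    · rw [sub_sub_cancel, cut_a, cut_one_sub, ← coe_dualCode, dualCode_dualCode]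
    · rw [cut_one_sub, cut_a, coe_dualCode]
    · rw [sub_zero, cut_one, cut_zero, dualSet_zero_s16]

theorem fuzzySelfOrthogonal_of_selfOrthogonal_general
    {Fq : Type} [Field Fq] {n k : ℕ} (hn : 1 ≤ n)
    (C : Submodule Fq (Fin n → Fq))
    (hso : (C : Set (Fin n → Fq)) ⊆ dualSet (C : Set (Fin n → Fq)))
    (hk : Module.finrank Fq C = k)
    (F : (Fin n → Fq) → ℝ)
    (hF0 : F 0 = 1)
    (hFC : ∀ x ∈ (C : Set (Fin n → Fq)) \ {0}, F x = 1 - (k : ℝ) / (n : ℝ))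
    (hFdual : ∀ x ∈ dualSet (C : Set (Fin n → Fq)) \ (C : Set (Fin n → Fq)),
      F x = (k : ℝ) / (n : ℝ))
    (hFout : ∀ x ∉ dualSet (C : Set (Fin n → Fq)), F x = 0) :
    IsFuzzySelfOrthogonal F := by
  subst hk
  have hn' : (0 : ℝ) < n := by exact_mod_cast hn
  have hCD : C ≤ dualCode C := hso
  have hle : (finrank Fq C / n : ℝ) ≤ 1 - finrank Fq C / n :=
    (div_le_one_sub_div_iff hn').2 (by exact_mod_cast two_mul_finrank_le_of_le_dualCode hCD)
  have hpos (hC : C ≠ ⊥) : (0 : ℝ) < finrank Fq C / n :=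
    div_pos (by exact_mod_cast Nat.pos_of_ne_zero (mt Submodule.finrank_eq_zero.1 hC)) hn'
  have hlt (hne : C ≠ dualCode C) : (finrank Fq C / n : ℝ) < 1 - finrank Fq C / n :=
    (div_lt_one_sub_div_iff hn').2
      (by exact_mod_cast two_mul_finrank_lt_of_lt_dualCode (hCD.lt_of_ne hne))
  exact IsLayered.isFuzzySelfOrthogonal hn ⟨hF0, hFC, hFdual, hFout⟩ (by positivity) hle hpos hlt

/-- embedding a self-orthogonal code: for a self-orthogonal `[n, k]` code
`C ⊆ C^⊥` over `F_q`, the fuzzy set `F` with `F 0 = 1`, `F x = 1 - k/n` on `C ∖ {0}`,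
`F x = k/n` on `C^⊥ ∖ C`, and `F x = 0` off `C^⊥` is a fuzzy self-orthogonal code;
in particular `|Im F| > 1` and `(F_{1-α})^⊥ = F_α` for every `α ∈ Im F`. -/
theorem fuzzySelfOrthogonal_of_selfOrthogonal
    {Fq : Type} [Field Fq] [Fintype Fq] {n k : ℕ} (hn : 1 ≤ n)
    (C : Submodule Fq (Fin n → Fq))
    (hso : (C : Set (Fin n → Fq)) ⊆ dualSet (C : Set (Fin n → Fq)))
    (hk : Module.finrank Fq C = k)
    (F : (Fin n → Fq) → ℝ)
    (hF0 : F 0 = 1)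
    (hFC : ∀ x ∈ (C : Set (Fin n → Fq)) \ {0}, F x = 1 - (k : ℝ) / (n : ℝ))
    (hFdual : ∀ x ∈ dualSet (C : Set (Fin n → Fq)) \ (C : Set (Fin n → Fq)),
      F x = (k : ℝ) / (n : ℝ))
    (hFout : ∀ x ∉ dualSet (C : Set (Fin n → Fq)), F x = 0) :
    IsFuzzySelfOrthogonal F :=
  fuzzySelfOrthogonal_of_selfOrthogonal_general hn C hso hk F hF0 hFC hFdual hFout
end
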